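/- arXiv:0804.4856 — 2 statements merged into one kernel-verified Lean document; each statement's English description precedes it below -/
import Mathlib

section
/- For all n ≥ 1, the partial derivative ∂b_n/∂x evaluated at (x,y) = (0,0) equals -1. -/
open MvPowerSeries

/-- `bPS n = b_{n-1}(x,y)` as an element of `ℤ[[x,y]]` (variable `0` is `x`, variable `1`
is `y`): `b_{-1} = 0`, `b_0 = 1` and
`b_n = ((1-x)·b_{n-1} + x·b_{n-2})·(1-yⁿ)⁻¹` for `n ≥ 1`, the inverse taken in
`ℤ[[x,y]]` where `1 - yⁿ` is a unit (its constant coefficient is `1`). -/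
noncomputable def bPS : ℕ → MvPowerSeries (Fin 2) ℤ
  | 0 => 0
  | 1 => 1
  | n + 2 => ((1 - X 0) * bPS (n + 1) + X 0 * bPS n) *
      invOfUnit (1 - (X 1 : MvPowerSeries (Fin 2) ℤ) ^ (n + 1)) 1

theorem coeff_mul_single01 (f g : MvPowerSeries (Fin 2) ℤ) :
    coeff (Finsupp.single (0 : Fin 2) 1) (f * g) =
      constantCoeff f * coeff (Finsupp.single (0 : Fin 2) 1) g +
      coeff (Finsupp.single (0 : Fin 2) 1) f * constantCoeff g := by
  rw [coeff_mul, Finsupp.antidiagonal_single]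
  rw [show Finset.HasAntidiagonal.antidiagonal (1 : ℕ) = ({(0,1),(1,0)} : Finset (ℕ × ℕ)) from rfl]
  rw [Finset.map_insert, Finset.map_singleton, Finset.sum_insert (by
    simp [Prod.ext_iff, Finsupp.single_eq_zero])]
  simp [coeff_zero_eq_constantCoeff]

theorem constCoeff_g (k : ℕ) :
    constantCoeff (1 - (X 1 : MvPowerSeries (Fin 2) ℤ) ^ (k + 1)) = 1 := by
  simp

theorem coeff01_g (k : ℕ) :
    coeff (Finsupp.single (0 : Fin 2) 1)
      (1 - (X 1 : MvPowerSeries (Fin 2) ℤ) ^ (k + 1)) = 0 := by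
  have hne : Finsupp.single (0 : Fin 2) 1 ≠ Finsupp.single (1 : Fin 2) (k + 1) := by
    intro h
    have := DFunLike.congr_fun h (0 : Fin 2)
    simp [Finsupp.single_apply] at this
  rw [map_sub, X_pow_eq, coeff_monomial_ne hne, coeff_one,
    if_neg (by simp [Finsupp.single_eq_zero]), sub_zero]

theorem constCoeff_u (k : ℕ) :
    constantCoeff
      (invOfUnit (1 - (X 1 : MvPowerSeries (Fin 2) ℤ) ^ (k + 1)) 1) = 1 := by
  rw [constantCoeff_invOfUnit]; rfl

theorem coeff01_u (k : ℕ) :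
    coeff (Finsupp.single (0 : Fin 2) 1)
      (invOfUnit (1 - (X 1 : MvPowerSeries (Fin 2) ℤ) ^ (k + 1)) 1) = 0 := by
  have h := mul_invOfUnit (1 - (X 1 : MvPowerSeries (Fin 2) ℤ) ^ (k + 1)) 1
    (by simp)
  have h2 := congrArg (coeff (Finsupp.single (0 : Fin 2) 1)) h
  rw [coeff_mul_single01, constCoeff_g, coeff01_g, one_mul, zero_mul, add_zero,
    coeff_one, if_neg (by simp [Finsupp.single_eq_zero])] at h2
  exact h2

theorem constCoeff_bPS (n : ℕ) : constantCoeff (bPS (n + 1)) = 1 := by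
  induction n with
  | zero => simp [bPS]
  | succ k ih =>
    rw [show k + 1 + 1 = k + 2 from rfl, bPS, map_mul, constCoeff_u, mul_one, map_add,
      map_mul, map_mul, map_sub, map_one, constantCoeff_X, sub_zero, one_mul, ih, zero_mul,
      add_zero]

theorem coeff01_X0 :
    coeff (Finsupp.single (0 : Fin 2) 1) (X 0 : MvPowerSeries (Fin 2) ℤ) = 1 := by
  rw [X, coeff_monomial_same]

theorem coeff01_X0_mul (f : MvPowerSeries (Fin 2) ℤ) :
    coeff (Finsupp.single (0 : Fin 2) 1) ((X 0 : MvPowerSeries (Fin 2) ℤ) * f) =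
      constantCoeff f := by
  rw [coeff_mul_single01, constantCoeff_X, zero_mul, zero_add, coeff01_X0, one_mul]

/-- For all `n ≥ 1`, `∂b_n/∂x (0,0) = -1`; the partial derivative at the origin is the
coefficient of the monomial `x¹y⁰`. -/
theorem stmt_4 (n : ℕ) (hn : 1 ≤ n) :
    MvPowerSeries.coeff (Finsupp.single (0 : Fin 2) 1) (bPS (n + 1)) = -1 := by
  induction n, hn using Nat.le_induction with
  | base =>
    rw [show (1:ℕ) + 1 = 0 + 2 from rfl, bPS, coeff_mul_single01, coeff01_u, mul_zero,
      zero_add, constCoeff_u, mul_one]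
    show coeff _ ((1 - X 0) * bPS 1 + X 0 * bPS 0) = -1
    rw [show bPS 1 = 1 from rfl, show bPS 0 = 0 from rfl, mul_one, mul_zero, add_zero,
      map_sub, coeff01_X0, coeff_one, if_neg (by simp [Finsupp.single_eq_zero])]
    ring
  | succ k hk ih =>
    rw [show k + 1 + 1 = k + 2 from rfl, bPS, coeff_mul_single01, coeff01_u, mul_zero,
      zero_add, constCoeff_u, mul_one, map_add, sub_mul, one_mul, map_sub, ih,
      coeff01_X0_mul, constCoeff_bPS, coeff01_X0_mul]
    obtain ⟨j, rfl⟩ := Nat.exists_eq_add_of_le hk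
    rw [show 1 + j = j + 1 from by ring, constCoeff_bPS]
    ring
end

section
/- For every n ≥ 1 there exist formal power series A_n, B_n ∈ ℤ[[x,y]] such that b_n(x,y) = b_n(0,y) - x + A_n(x,y)·x·y + B_n(x,y)·x^2 in ℤ[[x,y]]. -/
open MvPowerSeries

/-- `bPS0 n = b_{n-1}(0,y)`, i.e. the specialization of `b_{n-1}` at `x = 0`, viewed in
`ℤ[[x,y]]`: `b_{-1}(0,y) = 0`, `b_0(0,y) = 1` and `b_n(0,y) = b_{n-1}(0,y)·(1-yⁿ)⁻¹`. -/
noncomputable def bPS0 : ℕ → MvPowerSeries (Fin 2) ℤ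
  | 0 => 0
  | 1 => 1
  | n + 2 => bPS0 (n + 1) *
      invOfUnit (1 - (X 1 : MvPowerSeries (Fin 2) ℤ) ^ (n + 1)) 1

lemma hu (k : ℕ) :
    (1 - (X 1 : MvPowerSeries (Fin 2) ℤ) ^ (k+1)) *
      invOfUnit (1 - (X 1 : MvPowerSeries (Fin 2) ℤ) ^ (k+1)) 1 = 1 := by
  apply mul_invOfUnit
  simp

lemma bPS0_eq : ∀ n : ℕ, ∃ D, bPS0 (n+1) = 1 + X 1 * D := by
  intro n
  induction n with
  | zero => exact ⟨0, by simp [bPS0]⟩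
  | succ n ih =>
    obtain ⟨D, hD⟩ := ih
    set u := invOfUnit (1 - (X 1 : MvPowerSeries (Fin 2) ℤ) ^ (n + 1)) 1 with hudef
    refine ⟨D * u + X 1 ^ n * u, ?_⟩
    have h := hu n
    rw [← hudef] at h
    show bPS0 (n+1) * u = _
    linear_combination u * hD + h

lemma bPS_sub : ∀ n : ℕ, (∃ C, bPS n = bPS0 n + X 0 * C) ∧
    (∃ C, bPS (n+1) = bPS0 (n+1) + X 0 * C) := by
  intro n
  induction n with
  | zero => exact ⟨⟨0, by simp [bPS, bPS0]⟩, ⟨0, by simp [bPS, bPS0]⟩⟩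
  | succ n ih =>
    obtain ⟨⟨C0, h0⟩, ⟨C1, h1⟩⟩ := ih
    refine ⟨⟨C1, h1⟩, ?_⟩
    set u := invOfUnit (1 - (X 1 : MvPowerSeries (Fin 2) ℤ) ^ (n + 1)) 1 with hudef
    refine ⟨(C1 - bPS0 (n+1) + bPS0 n - X 0 * C1 + X 0 * C0) * u, ?_⟩
    show ((1 - X 0) * bPS (n+1) + X 0 * bPS n) * u = bPS0 (n+1) * u + _
    linear_combination ((1 - X 0) * u) * h1 + (X 0 * u) * h0

/-- For every `n ≥ 1` there are `A_n, B_n ∈ ℤ[[x,y]]` with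
`b_n(x,y) = b_n(0,y) - x + A_n·x·y + B_n·x²`. -/
theorem stmt_5 (n : ℕ) (hn : 1 ≤ n) :
    ∃ A B : MvPowerSeries (Fin 2) ℤ,
      bPS (n + 1) = bPS0 (n + 1) - X 0 + A * X 0 * X 1 + B * (X 0) ^ 2 := by
  induction n, hn using Nat.le_induction with
  | base =>
    set u := invOfUnit (1 - (X 1 : MvPowerSeries (Fin 2) ℤ) ^ (0 + 1)) 1 with hudef
    have h := hu 0
    rw [← hudef] at h
    refine ⟨-u, 0, ?_⟩
    show ((1 - X 0) * bPS 1 + X 0 * bPS 0) * u = bPS0 1 * u - X 0 + _ + _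
    simp only [bPS, bPS0]
    linear_combination (-(X 0)) * h
  | succ n hn ih =>
    obtain ⟨A, B, hAB⟩ := ih
    obtain ⟨C, hC⟩ := (bPS_sub n).1
    obtain ⟨n', rfl⟩ : ∃ n', n = n' + 1 := ⟨n - 1, by omega⟩
    obtain ⟨D, hD⟩ := bPS0_eq n'
    obtain ⟨D', hD'⟩ := bPS0_eq (n' + 1)
    set u := invOfUnit (1 - (X 1 : MvPowerSeries (Fin 2) ℤ) ^ (n' + 1 + 1)) 1 with hudef
    have h := hu (n' + 1)
    rw [← hudef] at h
    refine ⟨(A - D' + D) * u - X 1 ^ (n' + 1) * u,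
      (B + 1 - A * X 1 - B * X 0 + C) * u, ?_⟩
    show ((1 - X 0) * bPS (n' + 1 + 1) + X 0 * bPS (n' + 1)) * u
        = bPS0 (n' + 1 + 1) * u - X 0 + _ + _
    linear_combination ((1 - X 0) * u) * hAB + (X 0 * u) * hC + (X 0 * u) * hD
      - (X 0 * u) * hD' - X 0 * h
end
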